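/- The weighted chromatic symmetric function satisfies the deletion-near-contraction relation: for any weighted graph (G,ω) and non-loop edge e, X_{(G,ω)} = X_{(G∖e, ω)} − X_{((G,ω)⊙e) ∖ ℓ_e} + X_{(G,ω)⊙e}. -/

import Mathlib

/-- A coloring is proper if the two endpoints of each edge get distinct colors. -/
def IsProperColoring {V E C : Type*} (ends : E → Sym2 V) (κ : V → C) : Prop :=
  ∀ f : E, ¬ (Sym2.map κ (ends f)).IsDiag

/-- The weighted chromatic symmetric function of a weighted multigraph. -/
noncomputable def wcsf {V E : Type*} [Fintype V] (ends : E → Sym2 V) (ω : V → ℕ) :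
    MvPowerSeries ℕ ℚ :=
  fun d => (Set.ncard {κ : V → ℕ | IsProperColoring ends κ ∧
    ∀ i : ℕ, d i = ∑ v : V, if κ v = i then ω v else 0} : ℚ)

/-- The vertex map performed when contracting the edge `uv`: merge `u` into `v`,
landing inside the vertex set of the near-contraction (which has one extra new
vertex, represented by `Sum.inr ()`). -/
def contrMap {V : Type*} [DecidableEq V] (u v : V) (huv : u ≠ v) :
    V → {x : V // x ≠ u} :=
  fun x => if h : x = u then ⟨v, huv.symm⟩ else ⟨x, h⟩

/-- Endpoints map of the near-contraction `(G,ω)⊙e`: contract `e` into the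
vertex `v' = ⟨v,_⟩` and attach one new pendant edge `ℓ_e` (index `Sum.inr ()`)
joining `v'` to a new leaf `v'' = Sum.inr ()`. -/
def odotEnds {V E : Type*} [DecidableEq V] (ends : E → Sym2 V) (e : E)
    (u v : V) (huv : u ≠ v) :
    ({f : E // f ≠ e} ⊕ Unit) → Sym2 ({x : V // x ≠ u} ⊕ Unit) :=
  Sum.elim
    (fun f => Sym2.map (fun x => Sum.inl (contrMap u v huv x)) (ends f.1))
    (fun _ => s(Sum.inl ⟨v, huv.symm⟩, Sum.inr ()))

/-- Weights of the near-contraction: the merged vertex gets weight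
`ω u + ω v - 1`, the new leaf gets weight `1`, others are unchanged. -/
def odotWeight {V : Type*} [DecidableEq V] (ω : V → ℕ) (u v : V) :
    ({x : V // x ≠ u} ⊕ Unit) → ℕ :=
  Sum.elim (fun x => if x.1 = v then ω u + ω v - 1 else ω x.1) (fun _ => 1)

/-!
Fix a degree `d`. The proper colorings of `G ∖ e` split into those with `κ u ≠ κ v`, which are
the proper colorings of `G`, and those with `κ u = κ v`. Likewise the proper colorings of
`(G,ω)⊙e ∖ ℓ_e` split into those of `(G,ω)⊙e` and those giving `v'` and the new leaf the same
color. The two "monochromatic" families are in bijection: merge `u` into `v` and give the leaf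
their common color. The bijection keeps the monomial because the unit of weight moved from `v'`
to the leaf keeps its color. Hence `X_{G∖e} - X_G = X_{(G⊙e)∖ℓ_e} - X_{G⊙e}` coefficientwise.
-/

section Coloring

variable {V E C : Type*}

theorem isProperColoring_map_iff {W : Type*} (g : V → W) (ends : E → Sym2 V) (κ : W → C) :
    IsProperColoring (fun f => Sym2.map g (ends f)) κ ↔ IsProperColoring ends (κ ∘ g) := by
  simp only [IsProperColoring, Sym2.map_map]

theorem isProperColoring_iff_delete {ends : E → Sym2 V} {e : E} {a b : V}
    (he : ends e = s(a, b)) (κ : V → C) :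
    IsProperColoring ends κ ↔
      IsProperColoring (fun f : {f : E // f ≠ e} => ends f.1) κ ∧ κ a ≠ κ b := by
  have hab : ¬ (Sym2.map κ (ends e)).IsDiag ↔ κ a ≠ κ b := by simp [he]
  refine ⟨fun h => ⟨fun f => h f.1, hab.1 (h e)⟩, fun ⟨h, hne⟩ f => ?_⟩
  by_cases hf : f = e
  · exact hf ▸ hab.2 hne
  · exact h ⟨f, hf⟩

theorem isProperColoring_sumElim_iff (ends : E → Sym2 V) (a b : V) (κ : V → C) :
    IsProperColoring (Sum.elim ends fun _ : Unit => s(a, b)) κ ↔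
      IsProperColoring ends κ ∧ κ a ≠ κ b := by
  simp [IsProperColoring, Sum.forall]

end Coloring

section ColoringsOfDegree

variable {V E : Type*} [Fintype V]

-- the exponent of `x_i` in the monomial `∏_v x_{κ v}^{ω v}` of the coloring `κ`
def colorDegree (ω κ : V → ℕ) (i : ℕ) : ℕ :=
  ∑ x, if κ x = i then ω x else 0

def properColorings (ends : E → Sym2 V) (ω : V → ℕ) (d : ℕ →₀ ℕ) : Set (V → ℕ) :=
  {κ | IsProperColoring ends κ ∧ ∀ i, d i = colorDegree ω κ i}

theorem wcsf_apply (ends : E → Sym2 V) (ω : V → ℕ) (d : ℕ →₀ ℕ) :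
    wcsf ends ω d = (properColorings ends ω d).ncard := rfl

theorem finite_properColorings {ω : V → ℕ} (hω : ∀ x, 0 < ω x) (ends : E → Sym2 V)
    (d : ℕ →₀ ℕ) : (properColorings ends ω d).Finite := by
  refine (Set.Finite.pi fun _ : V => d.support.finite_toSet).subset ?_
  rintro κ ⟨-, hd⟩ x -
  have : ω x ≤ colorDegree ω κ (κ x) := by
    simpa [colorDegree] using Finset.single_le_sum (f := fun y => if κ y = κ x then ω y else 0)
      (fun _ _ => Nat.zero_le _) (Finset.mem_univ x)
  rw [Finset.mem_coe, Finsupp.mem_support_iff, hd]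
  exact (hω x |>.trans_le this).ne'

theorem ncard_properColorings_eq_add {E' : Type*} {ω : V → ℕ} (hω : ∀ x, 0 < ω x)
    {ends : E → Sym2 V} {ends' : E' → Sym2 V} {a b : V}
    (h : ∀ κ : V → ℕ, IsProperColoring ends κ ↔ IsProperColoring ends' κ ∧ κ a ≠ κ b)
    (d : ℕ →₀ ℕ) :
    (properColorings ends' ω d).ncard =
      (properColorings ends ω d).ncard + (properColorings ends' ω d ∩ {κ | κ a = κ b}).ncard := by
  have : properColorings ends ω d = properColorings ends' ω d \ {κ | κ a = κ b} := by
    ext κ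
    simp only [properColorings, Set.mem_sdiff, Set.mem_ofPred_eq, h]
    tauto
  rw [this, add_comm, Set.ncard_inter_add_ncard_sdiff_eq_ncard _ _ (finite_properColorings hω _ d)]

end ColoringsOfDegree

section NearContraction

variable {V : Type*} [DecidableEq V] {u v : V}

def odotColoring (u v : V) (κ : V → ℕ) : {x : V // x ≠ u} ⊕ Unit → ℕ :=
  Sum.elim (fun x => κ x.1) fun _ => κ v

def contrColoring (huv : u ≠ v) (κ : {x : V // x ≠ u} ⊕ Unit → ℕ) : V → ℕ :=
  κ ∘ Sum.inl ∘ contrMap u v huv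

theorem contrColoring_odotColoring {κ : V → ℕ} (huv : u ≠ v) (hκ : κ u = κ v) :
    contrColoring huv (odotColoring u v κ) = κ := by
  funext x
  by_cases hx : x = u
  · subst hx
    simp [odotColoring, contrColoring, contrMap, hκ]
  · simp [odotColoring, contrColoring, contrMap, hx]

theorem odotColoring_contrColoring {κ : {x : V // x ≠ u} ⊕ Unit → ℕ} (huv : u ≠ v)
    (hκ : κ (Sum.inl ⟨v, huv.symm⟩) = κ (Sum.inr ())) :
    odotColoring u v (contrColoring huv κ) = κ := by
  funext y
  rcases y with x | ⟨⟩
  · simp [odotColoring, contrColoring, contrMap, x.2]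
  · simp [odotColoring, contrColoring, contrMap, huv.symm, hκ]

theorem contrColoring_apply_u (huv : u ≠ v) (κ : {x : V // x ≠ u} ⊕ Unit → ℕ) :
    contrColoring huv κ u = contrColoring huv κ v := by
  simp [contrColoring, contrMap, huv.symm]

theorem odotWeight_pos {ω : V → ℕ} (hω : ∀ x, 0 < ω x) (y : {x : V // x ≠ u} ⊕ Unit) :
    0 < odotWeight ω u v y := by
  rcases y with x | ⟨⟩
  · simp only [odotWeight, Sum.elim_inl]
    split_ifs
    · have := hω u
      have := hω v
      omega
    · exact hω x
  · exact Nat.one_pos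

variable [Fintype V]

theorem colorDegree_odotWeight_odotColoring {ω κ : V → ℕ} (hu : 0 < ω u) (huv : u ≠ v)
    (hκ : κ u = κ v) (i : ℕ) :
    colorDegree (odotWeight ω u v) (odotColoring u v κ) i = colorDegree ω κ i := by
  let v' : {x : V // x ≠ u} := ⟨v, huv.symm⟩
  have hweight (y : {y // y ≠ v'}) : odotWeight ω u v (Sum.inl y.1) = ω y.1.1 :=
    if_neg fun h => y.2 (Subtype.ext h)
  unfold colorDegree
  rw [Fintype.sum_eq_add_sum_subtype_ne _ u, Fintype.sum_sum_type,
    Fintype.sum_eq_add_sum_subtype_ne _ v',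
    Fintype.sum_eq_add_sum_subtype_ne (fun x : {x : V // x ≠ u} => if κ x = i then ω x else 0) v']
  simp only [odotColoring, Sum.elim_inl, hweight, Fintype.sum_unique]
  simp only [odotWeight, Sum.elim_inl, Sum.elim_inr, v', if_pos, hκ]
  by_cases h : κ v = i <;> simp only [h, if_true, if_false] <;> omega

theorem ncard_properColorings_contract {E : Type*} (ends : E → Sym2 V) {ω : V → ℕ}
    (hu : 0 < ω u) (huv : u ≠ v) (d : ℕ →₀ ℕ) :
    (properColorings ends ω d ∩ {κ | κ u = κ v}).ncard =
      (properColorings (fun f => Sym2.map (fun x => Sum.inl (contrMap u v huv x)) (ends f))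
          (odotWeight ω u v) d ∩
        {κ | κ (Sum.inl ⟨v, huv.symm⟩) = κ (Sum.inr ())}).ncard := by
  refine Set.BijOn.ncard_eq (Set.InvOn.bijOn (f' := contrColoring huv)
    ⟨fun κ hκ => contrColoring_odotColoring huv hκ.2,
     fun κ hκ => odotColoring_contrColoring huv hκ.2⟩ ?_ ?_)
  · rintro κ ⟨⟨hp, hd⟩, hκ : κ u = κ v⟩
    refine ⟨⟨?_, fun i => (hd i).trans (colorDegree_odotWeight_odotColoring hu huv hκ i).symm⟩,
      rfl⟩
    rw [← contrColoring_odotColoring huv hκ] at hp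
    exact (isProperColoring_map_iff _ _ _).2 hp
  · rintro κ ⟨⟨hp, hd⟩, hκ⟩
    have hκ' := contrColoring_apply_u huv κ
    refine ⟨⟨(isProperColoring_map_iff _ _ _).1 hp, fun i => ?_⟩, hκ'⟩
    rw [← colorDegree_odotWeight_odotColoring hu huv hκ', odotColoring_contrColoring huv hκ]
    exact hd i

end NearContraction

/-- Deletion-near-contraction for the weighted chromatic symmetric function:
`X_{(G,ω)} = X_{(G∖e,ω)} - X_{((G,ω)⊙e)∖ℓ_e} + X_{(G,ω)⊙e}` for any non-loop
edge `e` of the weighted graph `(G,ω)`.  The near-contraction `(G,ω)⊙e`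
contracts `e` into a vertex `v'`, attaches a new leaf of weight `1` to `v'` via
the pendant edge `ℓ_e = Sum.inr ()`, and decreases the weight of `v'` by `1`. -/
theorem wcsf_deletion_near_contraction {V E : Type*} [Fintype V] [DecidableEq V]
    (ends : E → Sym2 V) (ω : V → ℕ) (hω : ∀ x, 0 < ω x)
    (e : E) (u v : V) (he : ends e = s(u, v)) (huv : u ≠ v) :
    wcsf ends ω =
      wcsf (fun f : {f : E // f ≠ e} => ends f.1) ω -
      wcsf (fun f : {f : E // f ≠ e} => (odotEnds ends e u v huv) (Sum.inl f))
          (odotWeight ω u v) +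
      wcsf (odotEnds ends e u v huv) (odotWeight ω u v) := by
  funext d
  have hdel := ncard_properColorings_eq_add hω (isProperColoring_iff_delete he) d
  have hodot := ncard_properColorings_eq_add (odotWeight_pos (v := v) hω)
    (ends := odotEnds ends e u v huv) (isProperColoring_sumElim_iff _ _ _) d
  have hcontr := ncard_properColorings_contract (fun f : {f : E // f ≠ e} => ends f.1) (hω u) huv d
  show wcsf ends ω d = wcsf _ ω d - wcsf _ _ d + wcsf (odotEnds ends e u v huv) _ d
  rw [wcsf_apply, wcsf_apply, wcsf_apply, wcsf_apply, hdel, hcontr]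
  -- `hodot` mentions `(G,ω)⊙e ∖ ℓ_e` with `odotEnds` unfolded
  erw [hodot]
  push_cast
  ring
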